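/- For every real number β with 0 < β < 1, every ε > 0, and every u with u ≥ ε², one has the quantitative error bound u^β − χ(u, ε²) ≤ ε^{2β} (1 + β · log(u/ε²)), where χ(u, ε²) := β ∫₀^u ((r + ε²)^β − ε^{2β})/r dr. -/

import Mathlib

/-!
Write `c = ε²`, so that `ε^{2β} = c^β`. Since `u^β = β ∫₀ᵘ r^{β-1} dr`, the error
`u^β − χ(u, c)` is `β` times the integral of the defect
`r^{β-1} − ((r + c)^β − c^β)/r = (r^β + c^β − (r + c)^β)/r`.
By subadditivity of `r ↦ r^β` the defect is at most `r^{β-1}`, and by monotonicity it is at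
most `c^β / r`. Using the first bound on `[0, c]` and the second on `[c, u]` gives
`c^β / β + c^β log(u / c)`.
-/

open MeasureTheory Set

/-- The smoothing function `χ(u, ε²) := β ∫₀ᵘ ((r + ε²)^β − ε^{2β})/r dr`
used to approximate `u ↦ u^β`. Powers with real exponents are `Real.rpow`. -/
noncomputable def chi (β ε u : ℝ) : ℝ :=
  β * ∫ r in (0:ℝ)..u, ((r + ε ^ 2) ^ β - ε ^ (2 * β)) / r

open Real intervalIntegral

noncomputable def chiIntegrand (β c r : ℝ) : ℝ :=
  ((r + c) ^ β - c ^ β) / r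

section

variable {β c r : ℝ}

lemma chiIntegrand_nonneg (hβ : 0 ≤ β) (hc : 0 ≤ c) (hr : 0 ≤ r) :
    0 ≤ chiIntegrand β c r :=
  div_nonneg (sub_nonneg.2 (rpow_le_rpow hc (le_add_of_nonneg_left hr) hβ)) hr

lemma chiIntegrand_le_rpow_sub_one (hβ0 : 0 ≤ β) (hβ1 : β ≤ 1) (hc : 0 ≤ c) (hr : 0 < r) :
    chiIntegrand β c r ≤ r ^ (β - 1) := by
  rw [chiIntegrand, rpow_sub_one hr.ne', div_le_div_iff_of_pos_right hr, sub_le_iff_le_add]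
  exact rpow_add_le_add_rpow hr.le hc hβ0 hβ1

lemma rpow_sub_one_sub_chiIntegrand_le (hβ : 0 ≤ β) (hc : 0 ≤ c) (hr : 0 < r) :
    r ^ (β - 1) - chiIntegrand β c r ≤ c ^ β / r := by
  rw [chiIntegrand, rpow_sub_one hr.ne', div_sub_div_same, div_le_div_iff_of_pos_right hr]
  linarith [rpow_le_rpow hr.le (le_add_of_nonneg_right hc) hβ]

lemma intervalIntegrable_chiIntegrand (hβ0 : 0 < β) (hβ1 : β ≤ 1) (hc : 0 ≤ c) {a b : ℝ}
    (ha : 0 ≤ a) (hb : 0 ≤ b) : IntervalIntegrable (chiIntegrand β c) volume a b := by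
  refine (intervalIntegrable_rpow' (r := β - 1) (by linarith)).mono_fun
    (by unfold chiIntegrand; fun_prop : Measurable _).aestronglyMeasurable ?_
  refine (ae_restrict_iff' measurableSet_uIoc).2 (Filter.Eventually.of_forall fun r hr => ?_)
  have hr0 : 0 < r := lt_of_le_of_lt (le_min ha hb) hr.1
  dsimp only
  rw [norm_of_nonneg (chiIntegrand_nonneg hβ0.le hc hr0.le),
    norm_of_nonneg (rpow_nonneg hr0.le _)]
  exact chiIntegrand_le_rpow_sub_one hβ0.le hβ1 hc hr0

lemma integral_rpow_sub_one (hβ : 0 < β) (b : ℝ) :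
    ∫ r in (0 : ℝ)..b, r ^ (β - 1) = b ^ β / β := by
  rw [integral_rpow (Or.inl (by linarith)), sub_add_cancel, zero_rpow hβ.ne', sub_zero]

lemma integral_rpow_sub_one_sub_chiIntegrand_le (hβ0 : 0 < β) (hβ1 : β ≤ 1) (hc : 0 < c)
    {u : ℝ} (hcu : c ≤ u) :
    ∫ r in (0 : ℝ)..u, (r ^ (β - 1) - chiIntegrand β c r) ≤
      c ^ β / β + c ^ β * log (u / c) := by
  have hint : ∀ {a b : ℝ}, 0 ≤ a → 0 ≤ b →
      IntervalIntegrable (fun r => r ^ (β - 1) - chiIntegrand β c r) volume a b :=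
    fun ha hb => (intervalIntegrable_rpow' (by linarith)).sub
      (intervalIntegrable_chiIntegrand hβ0 hβ1 hc.le ha hb)
  have hu : 0 < u := hc.trans_le hcu
  rw [← integral_add_adjacent_intervals (hint le_rfl hc.le) (hint hc.le hu.le)]
  refine add_le_add ?_ ?_
  · calc ∫ r in (0 : ℝ)..c, (r ^ (β - 1) - chiIntegrand β c r)
        ≤ ∫ r in (0 : ℝ)..c, r ^ (β - 1) :=
          integral_mono_on hc.le (hint le_rfl hc.le) (intervalIntegrable_rpow' (by linarith))
            fun r hr => sub_le_self _ (chiIntegrand_nonneg hβ0.le hc.le hr.1)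
      _ = c ^ β / β := integral_rpow_sub_one hβ0 c
  · calc ∫ r in c..u, (r ^ (β - 1) - chiIntegrand β c r)
        ≤ ∫ r in c..u, c ^ β * r⁻¹ :=
          integral_mono_on hcu (hint hc.le hu.le)
            ((intervalIntegrable_inv_iff.2 (Or.inr fun h0 =>
              hc.not_ge (by rw [uIcc_of_le hcu] at h0; exact h0.1))).const_mul _)
            fun r hr => rpow_sub_one_sub_chiIntegrand_le hβ0.le hc.le (hc.trans_le hr.1)
      _ = c ^ β * log (u / c) := by
        rw [intervalIntegral.integral_const_mul, integral_inv_of_pos hc hu]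

lemma rpow_sub_chi_eq_integral (hβ0 : 0 < β) (hβ1 : β ≤ 1) {ε u : ℝ} (hε : 0 ≤ ε)
    (hu : 0 ≤ u) :
    u ^ β - chi β ε u =
      β * ∫ r in (0 : ℝ)..u, (r ^ (β - 1) - chiIntegrand β (ε ^ 2) r) := by
  have hεβ : ε ^ (2 * β) = (ε ^ 2) ^ β := by rw [rpow_mul hε, rpow_two]
  rw [integral_sub (intervalIntegrable_rpow' (by linarith))
      (intervalIntegrable_chiIntegrand hβ0 hβ1 (sq_nonneg ε) le_rfl hu),
    integral_rpow_sub_one hβ0, chi, hεβ, mul_sub, mul_div_cancel₀ _ hβ0.ne']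
  rfl

end

/-- For `0 < β < 1`, `ε > 0`, and `u ≥ ε²`, one has the quantitative error bound
`u^β − χ(u, ε²) ≤ ε^{2β} (1 + β log(u/ε²))`. -/
theorem rpow_sub_chi_error_bound
    (β ε : ℝ) (hβ0 : 0 < β) (hβ1 : β < 1) (hε : 0 < ε)
    (u : ℝ) (hu : ε ^ 2 ≤ u) :
    u ^ β - chi β ε u ≤ ε ^ (2 * β) * (1 + β * Real.log (u / ε ^ 2)) := by
  have hc : 0 < ε ^ 2 := by positivity
  calc u ^ β - chi β ε u
      = β * ∫ r in (0 : ℝ)..u, (r ^ (β - 1) - chiIntegrand β (ε ^ 2) r) :=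
        rpow_sub_chi_eq_integral hβ0 hβ1.le hε.le (hc.le.trans hu)
    _ ≤ β * ((ε ^ 2) ^ β / β + (ε ^ 2) ^ β * log (u / ε ^ 2)) :=
      mul_le_mul_of_nonneg_left
        (integral_rpow_sub_one_sub_chiIntegrand_le hβ0 hβ1.le hc hu) hβ0.le
    _ = ε ^ (2 * β) * (1 + β * Real.log (u / ε ^ 2)) := by
      rw [rpow_mul hε.le, rpow_two]
      field_simp
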